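/- Let s¹,…,s^N and t¹,…,t^N be vectors in ℝ^d, each of norm r > 0, and let f : ℝ^d → ℝ^m be K-Lipschitz. If the average cosine distillation loss (1/N)·Σ_n (1 − ⟨s^n,t^n⟩/(‖s^n‖‖t^n‖)) = c, then the average squared feature discrepancy (1/N)·Σ_n ‖f(s^n) − f(t^n)‖² ≤ 2K²r²c. -/

import Mathlib

/-!
On the sphere of radius `r`, the law of cosines gives `‖s - t‖² = 2 r² (1 - cos ∠(s, t))`, so the
cosine loss of a slot pair is exactly its squared chordal distance divided by `2 r²`. A `K`-Lipschitz
decoder multiplies squared distances by at most `K²`, and averaging this slotwise bound over the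
`N` slots gives the claim.
-/

open InnerProductGeometry

section

variable {E F : Type*} [NormedAddCommGroup E] [InnerProductSpace ℝ E] [SeminormedAddCommGroup F]

theorem norm_sub_sq_eq_of_norm_eq {x y : E} {r : ℝ} (hx : ‖x‖ = r) (hy : ‖y‖ = r) :
    ‖x - y‖ ^ 2 = 2 * r ^ 2 * (1 - inner ℝ x y / (‖x‖ * ‖y‖)) := by
  rw [← cos_angle, sq, norm_sub_sq_eq_norm_sq_add_norm_sq_sub_two_mul_norm_mul_norm_mul_cos_angle,
    hx, hy]
  ring

theorem sq_norm_sub_le_of_norm_eq {f : E → F} {K : ℝ} (hf : ∀ x y, ‖f x - f y‖ ≤ K * ‖x - y‖)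
    {x y : E} {r : ℝ} (hx : ‖x‖ = r) (hy : ‖y‖ = r) :
    ‖f x - f y‖ ^ 2 ≤ 2 * K ^ 2 * r ^ 2 * (1 - inner ℝ x y / (‖x‖ * ‖y‖)) :=
  calc ‖f x - f y‖ ^ 2 ≤ (K * ‖x - y‖) ^ 2 := pow_le_pow_left₀ (norm_nonneg _) (hf x y) 2
    _ = 2 * K ^ 2 * r ^ 2 * (1 - inner ℝ x y / (‖x‖ * ‖y‖)) := by
      rw [mul_pow, norm_sub_sq_eq_of_norm_eq hx hy]
      ring

end

theorem stmt_9_general {d m N : ℕ}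
    (s t : Fin N → EuclideanSpace ℝ (Fin d)) (r c : ℝ)
    (hs : ∀ n, ‖s n‖ = r) (ht : ∀ n, ‖t n‖ = r)
    (f : EuclideanSpace ℝ (Fin d) → EuclideanSpace ℝ (Fin m))
    (K : ℝ) (hf : ∀ x y, ‖f x - f y‖ ≤ K * ‖x - y‖)
    (hc : (1 / (N : ℝ)) * ∑ n, (1 - (inner ℝ (s n) (t n) : ℝ) / (‖s n‖ * ‖t n‖)) = c) :
    (1 / (N : ℝ)) * ∑ n, ‖f (s n) - f (t n)‖ ^ 2 ≤ 2 * K ^ 2 * r ^ 2 * c := by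
  have hslot : ∑ n, ‖f (s n) - f (t n)‖ ^ 2 ≤
      ∑ n, 2 * K ^ 2 * r ^ 2 * (1 - (inner ℝ (s n) (t n) : ℝ) / (‖s n‖ * ‖t n‖)) :=
    Finset.sum_le_sum fun n _ => sq_norm_sub_le_of_norm_eq hf (hs n) (ht n)
  calc (1 / (N : ℝ)) * ∑ n, ‖f (s n) - f (t n)‖ ^ 2
      ≤ (1 / (N : ℝ)) * ∑ n, 2 * K ^ 2 * r ^ 2 *
          (1 - (inner ℝ (s n) (t n) : ℝ) / (‖s n‖ * ‖t n‖)) := by gcongr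
    _ = 2 * K ^ 2 * r ^ 2 * c := by
      rw [← hc, ← Finset.mul_sum]
      ring

theorem stmt_9 {d m N : ℕ} (hN : 0 < N)
    (s t : Fin N → EuclideanSpace ℝ (Fin d)) (r c : ℝ) (hr : 0 < r)
    (hs : ∀ n, ‖s n‖ = r) (ht : ∀ n, ‖t n‖ = r)
    (f : EuclideanSpace ℝ (Fin d) → EuclideanSpace ℝ (Fin m))
    (K : ℝ) (hf : ∀ x y, ‖f x - f y‖ ≤ K * ‖x - y‖)
    (hc : (1 / (N : ℝ)) * ∑ n, (1 - (inner ℝ (s n) (t n) : ℝ) / (‖s n‖ * ‖t n‖)) = c) :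
    (1 / (N : ℝ)) * ∑ n, ‖f (s n) - f (t n)‖ ^ 2 ≤ 2 * K ^ 2 * r ^ 2 * c :=
  stmt_9_general s t r c hs ht f K hf hc
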